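/- There exists a constant c₃ > 0 such that for every t > 0, every ε > 0 with t ≥ ε², and every x ∈ ℝ³: ∫_{C(0,ε/2,ε)} (2πt)^{-3/2} exp(−|x−y|²/(2t)) dy ≥ c₃ ε³ t^{-3/2} exp(−|x|²/(2t)). -/

import Mathlib

open MeasureTheory

/-- The open annulus `C(0, ε/2, ε) = {y ∈ ℝ³ : ε/2 < |y| < ε}`. -/
def ann (ε : ℝ) : Set (EuclideanSpace ℝ (Fin 3)) := {y | ε / 2 < ‖y‖ ∧ ‖y‖ < ε}

theorem stmt12 :
    ∃ c₃ > 0, ∀ t : ℝ, 0 < t → ∀ ε : ℝ, 0 < ε → ε ^ 2 ≤ t →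
      ∀ x : EuclideanSpace ℝ (Fin 3),
        c₃ * ε ^ 3 * t ^ (-(3 : ℝ) / 2) * Real.exp (-‖x‖ ^ 2 / (2 * t))
          ≤ ∫ y in ann ε,
              (2 * Real.pi * t) ^ (-(3 : ℝ) / 2) * Real.exp (-‖x - y‖ ^ 2 / (2 * t)) := by
  classical
  set E := EuclideanSpace ℝ (Fin 3)
  set κ := (volume (Metric.ball (0:E) 1)).toReal with hκ
  have κpos : 0 < κ := ENNReal.toReal_pos (Metric.measure_ball_pos volume 0 one_pos).ne'
    measure_ball_lt_top.ne
  have hπ : (0:ℝ) < 2 * Real.pi := by positivity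
  refine ⟨Real.exp (-(1/2)) * (2*Real.pi) ^ (-(3:ℝ)/2) * (κ/512), by positivity, ?_⟩
  intro t ht ε hε hεt x
  obtain ⟨u, hu1, hux⟩ : ∃ u : E, ‖u‖ = 1 ∧ (inner ℝ x u : ℝ) = ‖x‖ := by
    rcases eq_or_ne x 0 with rfl | hx
    · refine ⟨EuclideanSpace.single 0 1, ?_, by rw [inner_zero_left]; simp⟩
      rw [EuclideanSpace.norm_single]
      norm_num
    · refine ⟨‖x‖⁻¹ • x, ?_, ?_⟩
      · rw [norm_smul, norm_inv, norm_norm, inv_mul_cancel₀ (norm_ne_zero_iff.2 hx)]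
      · rw [real_inner_smul_right, real_inner_self_eq_norm_sq, pow_two,
          inv_mul_cancel_left₀ (norm_ne_zero_iff.2 hx)]
  set c : E := (3*ε/4) • u with hc
  have hcnorm : ‖c‖ = 3*ε/4 := by
    rw [hc, norm_smul, hu1, mul_one, Real.norm_eq_abs, abs_of_nonneg (by positivity)]
  set B := Metric.ball c (ε/8) with hB
  set f : E → ℝ := fun y => (2 * Real.pi * t) ^ (-(3 : ℝ) / 2) *
    Real.exp (-‖x - y‖ ^ 2 / (2 * t)) with hf
  have hBsub : B ⊆ ann ε := by
    intro y hy
    have hdist : ‖y - c‖ < ε/8 := by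
      rw [← dist_eq_norm]; exact hy
    have hl : ‖c‖ - ‖y‖ ≤ ‖y - c‖ := by
      have := norm_sub_norm_le c y
      rwa [norm_sub_rev] at this
    have h2 : ‖y‖ - ‖c‖ ≤ ‖y - c‖ := norm_sub_norm_le y c
    rw [hcnorm] at hl h2
    exact ⟨by linarith, by linarith⟩
  have hcont : Continuous f := by fun_prop
  have hannsub : ann ε ⊆ Metric.closedBall (0:E) ε := by
    intro y hy
    simpa [Metric.mem_closedBall, dist_eq_norm] using hy.2.le
  have hint : IntegrableOn f (ann ε) := by
    exact ((hcont.continuousOn).integrableOn_compact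
      (isCompact_closedBall (0:E) ε)).mono_set hannsub
  have hintB : IntegrableOn f B := hint.mono_set hBsub
  set L : ℝ := (2 * Real.pi * t) ^ (-(3 : ℝ) / 2) *
    (Real.exp (-(1/2)) * Real.exp (-‖x‖ ^ 2 / (2 * t))) with hL
  have key : ∀ y ∈ B, L ≤ f y := by
    intro y hy
    have hdist : ‖y - c‖ < ε/8 := by
      rw [← dist_eq_norm]; exact hy
    have hyann := hBsub hy
    have hynorm : ‖y‖ < ε := hyann.2
    have hinner : (0:ℝ) ≤ inner ℝ x y := by
      have hsplit : (inner ℝ x y : ℝ) = inner ℝ x (y - c) + (3*ε/4) * ‖x‖ := by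
        have : (inner ℝ x y : ℝ) = inner ℝ x (y - c) + inner ℝ x c := by
          rw [← inner_add_right]; norm_num
        rw [this, hc, real_inner_smul_right, hux]
      have habs : |(inner ℝ x (y - c) : ℝ)| ≤ ‖x‖ * (ε/8) := by
        refine (abs_real_inner_le_norm x (y - c)).trans ?_
        exact mul_le_mul_of_nonneg_left hdist.le (norm_nonneg x)
      have := neg_abs_le (inner ℝ x (y - c) : ℝ)
      nlinarith [norm_nonneg x]
    have hnormsq : ‖x - y‖ ^ 2 ≤ ‖x‖ ^ 2 + t := by
      have h1 : ‖x - y‖ ^ 2 = ‖x‖ ^ 2 - 2 * inner ℝ x y + ‖y‖ ^ 2 := by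
        rw [@norm_sub_sq_real]
      have h2 : ‖y‖ ^ 2 ≤ ε ^ 2 := by
        have := norm_nonneg y
        nlinarith
      nlinarith
    have hexp : Real.exp (-(1/2)) * Real.exp (-‖x‖ ^ 2 / (2 * t)) ≤
        Real.exp (-‖x - y‖ ^ 2 / (2 * t)) := by
      rw [← Real.exp_add]
      apply Real.exp_le_exp.2
      have heq : -(1/2) + -‖x‖ ^ 2 / (2 * t) = -(‖x‖^2 + t) / (2*t) := by
        field_simp; ring
      rw [heq]
      exact (div_le_div_iff_of_pos_right (by positivity)).2 (by linarith)
    calc L ≤ (2 * Real.pi * t) ^ (-(3 : ℝ) / 2) * Real.exp (-‖x - y‖ ^ 2 / (2 * t)) := by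
          apply mul_le_mul_of_nonneg_left hexp (by positivity)
      _ = f y := rfl
  have step1 : L * (volume B).toReal ≤ ∫ y in B, f y :=
    by have := setIntegral_ge_of_const_le_real measurableSet_ball measure_ball_lt_top.ne key hintB
       rwa [measureReal_def] at this
  have step2 : ∫ y in B, f y ≤ ∫ y in ann ε, f y := by
    apply setIntegral_mono_set hint
    · filter_upwards with y using by positivity
    · exact HasSubset.Subset.eventuallyLE hBsub
  have hvol : (volume B).toReal = (ε/8)^3 * κ := by
    rw [hB, Measure.addHaar_ball volume c (by positivity : (0:ℝ) ≤ ε/8)]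
    have : Module.finrank ℝ E = 3 := by
      simp [E, finrank_euclideanSpace]
    rw [this, ENNReal.toReal_mul, ENNReal.toReal_ofReal (by positivity)]
  have hrpow : (2 * Real.pi * t) ^ (-(3 : ℝ) / 2)
      = (2 * Real.pi) ^ (-(3 : ℝ) / 2) * t ^ (-(3 : ℝ) / 2) :=
    Real.mul_rpow hπ.le ht.le
  calc Real.exp (-(1/2)) * (2*Real.pi) ^ (-(3:ℝ)/2) * (κ/512) * ε ^ 3 *
        t ^ (-(3 : ℝ) / 2) * Real.exp (-‖x‖ ^ 2 / (2 * t))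
      = L * ((ε/8)^3 * κ) := by rw [hL, hrpow]; ring
    _ = L * (volume B).toReal := by rw [hvol]
    _ ≤ ∫ y in B, f y := step1
    _ ≤ ∫ y in ann ε, f y := step2
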